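/- For every n ≥ 2, the refined Motzkin polynomial M_n(u_1,u_2,u_3;v_1,v_2) := Σ_{T∈𝒜_{n+1}} u_1^{sleaf(T)} u_2^{etleaf(T)} u_3^{entleaf(T)} v_1^{yerleaf(T)} v_2^{syleaf(T)} satisfies the symmetry M_n(u_1,u_2,u_3;v_1,v_2) = M_n(u_3,u_2,u_1;v_1,v_2) in ℤ[u_1,u_2,u_3,v_1,v_2]. -/

import Mathlib

/-- Labeled plane trees: a node with a label in `ℕ` and a (left-to-right ordered)
list of children. -/
inductive LTree : Type where
  | node : ℕ → List LTree → LTree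

namespace LTree

/-- The label of the root. -/
def label : LTree → ℕ
  | node a _ => a

/-- The list of children of the root, from left to right. -/
def children : LTree → List LTree
  | node _ cs => cs

/-- A tree consisting of a single node is a leaf. -/
def isLeaf (t : LTree) : Bool := t.children.isEmpty

/-- The list of all subtrees (i.e. all nodes) of a tree. -/
def subtrees : LTree → List LTree
  | node a cs => node a cs :: (cs.attach.map (fun c => subtrees c.1)).flatten
decreasing_by
  simp only [LTree.node.sizeOf_spec]
  have := List.sizeOf_lt_of_mem c.2
  omega

/-- The multiset of labels of all nodes of a tree. -/
def labels (T : LTree) : Multiset ℕ := (T.subtrees.map label : List ℕ)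

/-- `T` is a weakly increasing tree on the multiset `M`: the root is labeled `0`,
the multiset of labels is `M ∪ {0}`, labels weakly increase along root-to-leaf paths,
and the labels of the children of each node weakly increase from right to left. -/
def IsWIT (M : Multiset ℕ) (T : LTree) : Prop :=
  T.label = 0 ∧ T.labels = 0 ::ₘ M ∧
  ∀ t ∈ T.subtrees, (∀ c ∈ t.children, t.label ≤ c.label) ∧
    List.Chain' (fun a b => b ≤ a) (t.children.map label)

/-- `T` is (an encoding of) a plane tree with `n` edges: all labels are zero
and there are `n + 1` nodes. -/
def IsPlane (n : ℕ) (T : LTree) : Prop :=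
  (∀ t ∈ T.subtrees, t.label = 0) ∧ T.subtrees.length = n + 1

/-- The number of singleton leaves: leaves that are the only child of their parent. -/
def sleaf (T : LTree) : ℕ :=
  T.subtrees.countP (fun t => match t.children with
    | [c] => c.isLeaf
    | _ => false)

/-- The number of elder leaves: leaves that are the leftmost child of their parent
and have siblings. -/
def eleaf (T : LTree) : ℕ :=
  T.subtrees.countP (fun t => match t.children with
    | c :: _ :: _ => c.isLeaf
    | _ => false)

/-- The number of young leaves: leaves that are not the leftmost child of their parent. -/
def yleaf (T : LTree) : ℕ :=
  (T.subtrees.map (fun t => t.children.tail.countP isLeaf)).sum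

/-- The number of young internal nodes: internal nodes whose leftmost child is internal. -/
def yint (T : LTree) : ℕ :=
  T.subtrees.countP (fun t => match t.children with
    | c :: _ => !c.isLeaf
    | _ => false)

/-- The number of singleton internal nodes: parents of a singleton leaf. -/
def sint (T : LTree) : ℕ :=
  T.subtrees.countP (fun t => match t.children with
    | [c] => c.isLeaf
    | _ => false)

/-- The number of elder internal nodes: parents of an elder leaf. -/
def eint (T : LTree) : ℕ :=
  T.subtrees.countP (fun t => match t.children with
    | c :: _ :: _ => c.isLeaf
    | _ => false)

/-- The number of old leaves: leaves that are the leftmost child of their parent. -/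
def oleaf (T : LTree) : ℕ := sleaf T + eleaf T

/-- The number of old internal nodes. -/
def oint (T : LTree) : ℕ := sint T + eint T

/-- Whether the root of `t` is the parent of a singleton leaf. -/
def isSingletonParent (t : LTree) : Bool :=
  match t.children with
  | [c] => c.isLeaf
  | _ => false

/-- The number of singleton leaves with uncle: singleton leaves whose parent has an
elder sibling (a sibling to its left). -/
def suleaf (T : LTree) : ℕ :=
  (T.subtrees.map (fun g => g.children.tail.countP isSingletonParent)).sum

/-- The number of singleton leaves with no uncle: singleton leaves whose parent has no
elder sibling (the parent is the root or a leftmost child). -/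
def snuleaf (T : LTree) : ℕ :=
  (if T.isSingletonParent then 1 else 0) +
    (T.subtrees.map (fun g => match g.children with
      | c :: _ => if c.isSingletonParent then 1 else 0
      | [] => 0)).sum

/-- The number of elder twin leaves: elder leaves such that the second child of their
parent is also a leaf. -/
def etleaf (T : LTree) : ℕ :=
  T.subtrees.countP (fun t => match t.children with
    | c :: d :: _ => c.isLeaf && d.isLeaf
    | _ => false)

/-- The number of elder non-twin leaves: elder leaves such that the second child of
their parent is not a leaf. -/
def entleaf (T : LTree) : ℕ :=
  T.subtrees.countP (fun t => match t.children with
    | c :: d :: _ => c.isLeaf && !d.isLeaf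
    | _ => false)

/-- The number of second leaves: young leaves that are the second child of their parent. -/
def syleaf (T : LTree) : ℕ :=
  T.subtrees.countP (fun t => match t.children with
    | _ :: d :: _ => d.isLeaf
    | _ => false)

/-- The number of younger leaves: young leaves that are not the second child of their
parent. -/
def yerleaf (T : LTree) : ℕ :=
  (T.subtrees.map (fun t => (t.children.drop 2).countP isLeaf)).sum

end LTree

/-!
A tip-augmented tree with at least two nodes is `node 0 (leaf :: l)` for a forest `l` of
tip-augmented trees. The leftmost leaf is an elder twin or elder non-twin leaf according to
whether the second child is a leaf, and the leaves further right are younger leaves. Hence, with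
`x` marking nodes, the series `S` of the weights and the series `F` of forests, in which a tree
that is a single leaf weighs `v₁`, satisfy
  `F = 1 + (S + (v₁ - 1) x) F`  and  `S = x + u₁ x² + x² (u₃ S + (u₂ v₂ - u₃) x) F`.
If `S'` is `S` with `u₁` and `u₃` exchanged, eliminating `F` and `F'` shows that
`S - S' - (u₁ - u₃) x²` times the unit `1 + (2 - v₁) x - S - S'` vanishes, so `S` and `S'`
differ only in the coefficient of `x²`.
-/

theorem List.prod_map_pow_eq_pow_sum {ι M : Type*} [CommMonoid M] (l : List ι) (f : ι → ℕ)
    (a : M) : (l.map fun i => a ^ f i).prod = a ^ (l.map f).sum := by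
  induction l with
  | nil => simp
  | cons i l ih => rw [List.map_cons, List.prod_cons, ih, List.map_cons, List.sum_cons, pow_add]

theorem sub_mul_eq_zero_of_motzkin_eqs {A : Type*} [CommRing A] {x a c₁ c₃ e S S' F F' : A}
    (hF : F * (1 - S - a * x) = 1) (hF' : F' * (1 - S' - a * x) = 1)
    (hS : S = x + c₁ * x ^ 2 + x ^ 2 * ((c₃ * S + (e - c₃) * x) * F))
    (hS' : S' = x + c₃ * x ^ 2 + x ^ 2 * ((c₁ * S' + (e - c₁) * x) * F')) :
    (S - S' - (c₁ - c₃) * x ^ 2) * (1 + (1 - a) * x - S - S') = 0 := by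
  linear_combination (1 - S - a * x) * hS - (1 - S' - a * x) * hS' +
    (c₃ * S + (e - c₃) * x) * x ^ 2 * hF - (c₁ * S' + (e - c₁) * x) * x ^ 2 * hF'

namespace LTree

theorem subtrees_node (a : ℕ) (cs : List LTree) :
    (node a cs).subtrees = node a cs :: (cs.map subtrees).flatten := by
  rw [subtrees]
  simp

theorem countP_subtrees_node (p : LTree → Bool) (a : ℕ) (cs : List LTree) :
    (node a cs).subtrees.countP p =
      (if p (node a cs) then 1 else 0) + (cs.map fun c => c.subtrees.countP p).sum := by
  rw [subtrees_node, List.countP_cons, List.countP_flatten, List.map_map, add_comm]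
  rfl

theorem sum_map_subtrees_node (f : LTree → ℕ) (a : ℕ) (cs : List LTree) :
    ((node a cs).subtrees.map f).sum =
      f (node a cs) + (cs.map fun c => (c.subtrees.map f).sum).sum := by
  rw [subtrees_node, List.map_cons, List.sum_cons, List.map_flatten, List.sum_flatten,
    List.map_map, List.map_map]
  rfl

def leaf : LTree := node 0 []

def size (t : LTree) : ℕ := t.subtrees.length

theorem size_node (a : ℕ) (cs : List LTree) : size (node a cs) = (cs.map size).sum + 1 := by
  rw [size, subtrees_node, List.length_cons, List.length_flatten, List.map_map]
  rfl

theorem size_pos (t : LTree) : 0 < size t := by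
  cases t
  rw [size_node]
  omega

theorem size_eq_one_iff {t : LTree} : size t = 1 ↔ t.isLeaf := by
  obtain ⟨a, cs⟩ := t
  rw [size_node]
  cases cs with
  | nil => simp [isLeaf, children]
  | cons c cs =>
    have := size_pos c
    simp [isLeaf, children]
    omega

theorem yint_node (a : ℕ) (cs : List LTree) :
    yint (node a cs) =
      (if (match cs with | c :: _ => !c.isLeaf | _ => false) then 1 else 0) +
        (cs.map yint).sum :=
  countP_subtrees_node _ a cs

def IsTipAugmented (t : LTree) : Prop := (∀ s ∈ t.subtrees, s.label = 0) ∧ yint t = 0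

theorem isTipAugmented_node_iff {a : ℕ} {cs : List LTree} :
    IsTipAugmented (node a cs) ↔
      a = 0 ∧ (∀ c ∈ cs, IsTipAugmented c) ∧ ∀ c ∈ cs.head?, c.isLeaf := by
  have hyint : yint (node a cs) = 0 ↔ (∀ c ∈ cs.head?, c.isLeaf) ∧ ∀ c ∈ cs, yint c = 0 := by
    rw [yint_node, Nat.add_eq_zero_iff, List.sum_eq_zero_iff]
    cases cs <;> simp
  simp only [IsTipAugmented, subtrees_node, List.forall_mem_cons, List.mem_flatten,
    List.mem_map, hyint]
  constructor
  · rintro ⟨⟨ha, hs⟩, hhead, hc⟩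
    exact ⟨ha, fun c hc' => ⟨fun s hs' => hs s ⟨_, ⟨c, hc', rfl⟩, hs'⟩, hc c hc'⟩, hhead⟩
  · rintro ⟨ha, hc, hhead⟩
    refine ⟨⟨ha, ?_⟩, hhead, fun c hc' => (hc c hc').2⟩
    rintro s ⟨_, ⟨c, hc', rfl⟩, hs⟩
    exact (hc c hc').1 s hs

theorem IsTipAugmented.eq_leaf {t : LTree} (ht : IsTipAugmented t) (hl : t.isLeaf) : t = leaf := by
  obtain ⟨a, cs⟩ := t
  obtain ⟨rfl, -⟩ := isTipAugmented_node_iff.1 ht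
  simp_all [isLeaf, children, leaf]

theorem isTipAugmented_iff {t : LTree} :
    IsTipAugmented t ↔ t = leaf ∨ ∃ l, (∀ c ∈ l, IsTipAugmented c) ∧ t = node 0 (leaf :: l) := by
  constructor
  · intro ht
    obtain ⟨a, cs⟩ := t
    obtain ⟨rfl, hcs, hhead⟩ := isTipAugmented_node_iff.1 ht
    cases cs with
    | nil => exact Or.inl rfl
    | cons c l =>
      have hc : c = leaf := (hcs c (by simp)).eq_leaf (hhead c rfl)
      exact Or.inr ⟨l, fun d hd => hcs d (by simp [hd]), by rw [hc]⟩
  · rintro (rfl | ⟨l, hl, rfl⟩)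
    · exact isTipAugmented_node_iff.2 (by simp)
    · refine isTipAugmented_node_iff.2 ⟨rfl, ?_, by simp [leaf, isLeaf, children]⟩
      exact List.forall_mem_cons.2 ⟨isTipAugmented_node_iff.2 (by simp), hl⟩

noncomputable instance : DecidableEq LTree := Classical.decEq _

mutual

noncomputable def trees : ℕ → Finset LTree
  | 0 => ∅
  | 1 => {leaf}
  | k + 2 => (forests k).image fun l => node 0 (leaf :: l)
termination_by m => 2 * m

noncomputable def forests : ℕ → Finset (List LTree)
  | 0 => {[]}
  | k + 1 => Finset.univ.biUnion fun i : Fin (k + 1) =>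
      (trees (i + 1) ×ˢ forests (k - i)).image fun p => p.1 :: p.2
termination_by m => 2 * m + 1
decreasing_by all_goals omega

end

theorem size_leaf : size leaf = 1 := size_eq_one_iff.2 rfl

theorem size_node_leaf_cons (l : List LTree) :
    size (node 0 (leaf :: l)) = (l.map size).sum + 2 := by
  rw [size_node, List.map_cons, List.sum_cons, size_leaf]
  omega

mutual

theorem mem_trees {m : ℕ} {t : LTree} : t ∈ trees m ↔ IsTipAugmented t ∧ size t = m := by
  match m with
  | 0 => simpa [trees] using fun _ => (size_pos t).ne'
  | 1 =>
    rw [trees, Finset.mem_singleton]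
    refine ⟨?_, fun ⟨ht, hsize⟩ => ht.eq_leaf (size_eq_one_iff.1 hsize)⟩
    rintro rfl
    exact ⟨isTipAugmented_iff.2 (Or.inl rfl), size_leaf⟩
  | k + 2 =>
    rw [trees, Finset.mem_image]
    constructor
    · rintro ⟨l, hl, rfl⟩
      obtain ⟨hl, hsize⟩ := mem_forests.1 hl
      exact ⟨isTipAugmented_iff.2 (Or.inr ⟨l, hl, rfl⟩), by rw [size_node_leaf_cons, hsize]⟩
    · rintro ⟨ht, hsize⟩
      rcases isTipAugmented_iff.1 ht with rfl | ⟨l, hl, rfl⟩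
      · rw [size_leaf] at hsize
        omega
      · rw [size_node_leaf_cons] at hsize
        exact ⟨l, mem_forests.2 ⟨hl, by omega⟩, rfl⟩
termination_by 2 * m

theorem mem_forests {k : ℕ} {l : List LTree} :
    l ∈ forests k ↔ (∀ c ∈ l, IsTipAugmented c) ∧ (l.map size).sum = k := by
  match k with
  | 0 =>
    rw [forests, Finset.mem_singleton]
    cases l with
    | nil => simp
    | cons t l => simpa using fun _ _ _ => by have := size_pos t; omega
  | k + 1 =>
    simp only [forests, Finset.mem_biUnion, Finset.mem_univ, true_and, Finset.mem_image,
      Finset.mem_product, Prod.exists]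
    constructor
    · rintro ⟨i, t, l', ⟨ht, hl'⟩, rfl⟩
      obtain ⟨ht, hsize⟩ := mem_trees.1 ht
      obtain ⟨hl', hsum⟩ := mem_forests.1 hl'
      refine ⟨List.forall_mem_cons.2 ⟨ht, hl'⟩, ?_⟩
      rw [List.map_cons, List.sum_cons, hsize, hsum]
      omega
    · intro ⟨hl, hsum⟩
      cases l with
      | nil => simp at hsum
      | cons t l' =>
        rw [List.forall_mem_cons] at hl
        rw [List.map_cons, List.sum_cons] at hsum
        have ht := size_pos t
        have hle : size t ≤ k + 1 := by omega
        refine ⟨⟨size t - 1, by omega⟩, t, l', ⟨mem_trees.2 ⟨hl.1, by simp; omega⟩,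
          mem_forests.2 ⟨hl.2, by simp; omega⟩⟩, rfl⟩
termination_by 2 * k + 1

end

open Finset in
theorem sum_forests_succ {M : Type*} [AddCommMonoid M] (k : ℕ) (f : List LTree → M) :
    ∑ l ∈ forests (k + 1), f l =
      ∑ p ∈ antidiagonal (k + 1), ∑ t ∈ trees p.1, ∑ l ∈ forests p.2, f (t :: l) := by
  have hdisj : ((univ : Finset (Fin (k + 1))) : Set (Fin (k + 1))).PairwiseDisjoint fun i =>
      (trees (i + 1) ×ˢ forests (k - i)).image fun p => p.1 :: p.2 := by
    intro i _ j _ hij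
    simp only [Function.onFun, disjoint_left, mem_image, mem_product, not_exists, not_and,
      Prod.forall]
    rintro _ ⟨⟨t, l⟩, ⟨-, hl⟩, rfl⟩ t' l' ⟨-, hl'⟩ hcons
    obtain ⟨rfl, rfl⟩ := List.cons.inj hcons
    have := (mem_forests.1 hl).2.symm.trans (mem_forests.1 hl').2
    exact hij (Fin.ext (by omega))
  rw [forests, sum_biUnion hdisj, Nat.sum_antidiagonal_succ, trees, sum_empty, zero_add,
    Nat.sum_antidiagonal_eq_sum_range_succ_mk, ← Fin.sum_univ_eq_sum_range]
  refine sum_congr rfl fun i _ => ?_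
  rw [sum_image fun _ _ _ _ h => Prod.ext (List.cons.inj h).1 (List.cons.inj h).2, sum_product]

theorem sleaf_node (a : ℕ) (cs : List LTree) :
    sleaf (node a cs) = (if (node a cs).isSingletonParent then 1 else 0) + (cs.map sleaf).sum :=
  countP_subtrees_node _ a cs

theorem etleaf_node (a : ℕ) (cs : List LTree) :
    etleaf (node a cs) =
      (if (match cs with | c :: d :: _ => c.isLeaf && d.isLeaf | _ => false) then 1 else 0) +
        (cs.map etleaf).sum :=
  countP_subtrees_node _ a cs

theorem entleaf_node (a : ℕ) (cs : List LTree) :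
    entleaf (node a cs) =
      (if (match cs with | c :: d :: _ => c.isLeaf && !d.isLeaf | _ => false) then 1 else 0) +
        (cs.map entleaf).sum :=
  countP_subtrees_node _ a cs

theorem syleaf_node (a : ℕ) (cs : List LTree) :
    syleaf (node a cs) =
      (if (match cs with | _ :: d :: _ => d.isLeaf | _ => false) then 1 else 0) +
        (cs.map syleaf).sum :=
  countP_subtrees_node _ a cs

theorem yerleaf_node (a : ℕ) (cs : List LTree) :
    yerleaf (node a cs) = (cs.drop 2).countP isLeaf + (cs.map yerleaf).sum :=
  sum_map_subtrees_node _ a cs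

section Weight

variable {M : Type*} [CommMonoid M] (u₁ u₂ u₃ v₁ v₂ : M)

def wt (t : LTree) : M :=
  u₁ ^ sleaf t * u₂ ^ etleaf t * u₃ ^ entleaf t * v₁ ^ yerleaf t * v₂ ^ syleaf t

/- Below a node whose first child is a leaf, the second child `t` makes that leaf an elder twin
(`u₂`) or elder non-twin (`u₃`) leaf and contributes `v₂` if it is a leaf itself; the later
children that are leaves are younger leaves (`v₁`). -/
def secondChildWt (t : LTree) : M := if t.isLeaf then u₂ * v₂ else u₃ * wt u₁ u₂ u₃ v₁ v₂ t

def laterChildWt (t : LTree) : M := if t.isLeaf then v₁ else wt u₁ u₂ u₃ v₁ v₂ t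

theorem wt_node (a : ℕ) (cs : List LTree) :
    wt u₁ u₂ u₃ v₁ v₂ (node a cs) =
      u₁ ^ (if (node a cs).isSingletonParent then 1 else 0) *
      u₂ ^ (if (match cs with | c :: d :: _ => c.isLeaf && d.isLeaf | _ => false) then 1 else 0) *
      u₃ ^ (if (match cs with | c :: d :: _ => c.isLeaf && !d.isLeaf | _ => false) then 1 else 0) *
      v₁ ^ (cs.drop 2).countP isLeaf *
      v₂ ^ (if (match cs with | _ :: d :: _ => d.isLeaf | _ => false) then 1 else 0) *
      (cs.map (wt u₁ u₂ u₃ v₁ v₂)).prod := by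
  have hwt : wt u₁ u₂ u₃ v₁ v₂ = fun t =>
      u₁ ^ sleaf t * u₂ ^ etleaf t * u₃ ^ entleaf t * v₁ ^ yerleaf t * v₂ ^ syleaf t := rfl
  simp only [hwt, sleaf_node, etleaf_node, entleaf_node, syleaf_node, yerleaf_node, pow_add,
    List.prod_map_mul, List.prod_map_pow_eq_pow_sum]
  ac_rfl

theorem wt_of_isLeaf {t : LTree} (ht : t.isLeaf) : wt u₁ u₂ u₃ v₁ v₂ t = 1 := by
  obtain ⟨a, cs⟩ := t
  obtain rfl : cs = [] := by simpa [isLeaf, children] using ht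
  simp [wt_node, isSingletonParent, children]

theorem wt_node_singleton (a : ℕ) : wt u₁ u₂ u₃ v₁ v₂ (node a [leaf]) = u₁ := by
  simp [wt_node, isSingletonParent, children, leaf, isLeaf]

theorem prod_map_laterChildWt (l : List LTree) :
    (l.map (laterChildWt u₁ u₂ u₃ v₁ v₂)).prod =
      v₁ ^ l.countP isLeaf * (l.map (wt u₁ u₂ u₃ v₁ v₂)).prod := by
  induction l with
  | nil => simp
  | cons t l ih =>
    simp only [List.map_cons, List.prod_cons, List.countP_cons, ih, laterChildWt]
    cases ht : t.isLeaf
    · simp only [if_false, Bool.false_eq_true, add_zero]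
      ac_rfl
    · simp only [if_true, wt_of_isLeaf _ _ _ _ _ ht, pow_succ]
      ac_rfl

theorem wt_node_leaf_cons_cons (a : ℕ) (t : LTree) (l : List LTree) :
    wt u₁ u₂ u₃ v₁ v₂ (node a (leaf :: t :: l)) =
      secondChildWt u₁ u₂ u₃ v₁ v₂ t * (l.map (laterChildWt u₁ u₂ u₃ v₁ v₂)).prod := by
  have hleaf : leaf.isLeaf := rfl
  rw [wt_node, prod_map_laterChildWt, secondChildWt]
  cases ht : t.isLeaf
  · simp [isSingletonParent, children, hleaf, ht, wt_of_isLeaf _ _ _ _ _ hleaf]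
    ac_rfl
  · simp [isSingletonParent, children, hleaf, ht, wt_of_isLeaf _ _ _ _ _ hleaf,
      wt_of_isLeaf _ _ _ _ _ ht]
    ac_rfl

end Weight

open PowerSeries

section Series

variable {R : Type*} [CommRing R]

noncomputable def treeSeries (f : LTree → R) : R⟦X⟧ := mk fun m => ∑ t ∈ trees m, f t

noncomputable def forestSeries (f : LTree → R) : R⟦X⟧ :=
  mk fun k => ∑ l ∈ forests k, (l.map f).prod

@[simp]
theorem coeff_treeSeries (f : LTree → R) (m : ℕ) :
    coeff m (treeSeries f) = ∑ t ∈ trees m, f t :=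
  coeff_mk _ _

@[simp]
theorem coeff_forestSeries (f : LTree → R) (k : ℕ) :
    coeff k (forestSeries f) = ∑ l ∈ forests k, (l.map f).prod :=
  coeff_mk _ _

theorem constantCoeff_treeSeries (f : LTree → R) : constantCoeff (treeSeries f) = 0 := by
  simp [← coeff_zero_eq_constantCoeff_apply, trees]

theorem coeff_succ_treeSeries_mul_forestSeries (g f : LTree → R) (k : ℕ)
    (φ : List LTree → R) (hφ : ∀ t l, φ (t :: l) = g t * (l.map f).prod) :
    coeff (k + 1) (treeSeries g * forestSeries f) = ∑ l ∈ forests (k + 1), φ l := by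
  rw [coeff_mul, sum_forests_succ]
  refine Finset.sum_congr rfl fun p _ => ?_
  simp only [coeff_treeSeries, coeff_forestSeries, Finset.sum_mul, Finset.mul_sum, hφ]
  exact Finset.sum_comm

theorem forestSeries_eq (f : LTree → R) :
    forestSeries f = 1 + treeSeries f * forestSeries f := by
  ext (_ | k)
  · simp [coeff_zero_eq_constantCoeff, constantCoeff_treeSeries, forests]
  · rw [map_add, coeff_one, if_neg k.succ_ne_zero, zero_add,
      coeff_succ_treeSeries_mul_forestSeries f f k (fun l => (l.map f).prod) fun _ _ => by simp,
      coeff_forestSeries]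

theorem treeSeries_const_mul (c : R) (f : LTree → R) :
    treeSeries (fun t => c * f t) = C c * treeSeries f := by
  ext m
  simp [Finset.mul_sum]

theorem treeSeries_ite_isLeaf (a : R) (f : LTree → R) :
    treeSeries (fun t => if t.isLeaf then a else f t) = treeSeries f + C (a - f leaf) * X := by
  ext m
  rw [map_add, coeff_C_mul, coeff_X]
  by_cases hm : m = 1
  · subst hm
    simp [trees, leaf, isLeaf, children]
  · rw [if_neg hm, mul_zero, add_zero, coeff_treeSeries, coeff_treeSeries]
    refine Finset.sum_congr rfl fun t ht => if_neg fun hl => hm ?_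
    rw [← (mem_trees.1 ht).2, size_eq_one_iff.2 hl]

variable (u₁ u₂ u₃ v₁ v₂ : R)

theorem treeSeries_secondChildWt :
    treeSeries (secondChildWt u₁ u₂ u₃ v₁ v₂) =
      C u₃ * treeSeries (wt u₁ u₂ u₃ v₁ v₂) + C (u₂ * v₂ - u₃) * X := by
  rw [show secondChildWt u₁ u₂ u₃ v₁ v₂ = fun t =>
      if t.isLeaf then u₂ * v₂ else u₃ * wt u₁ u₂ u₃ v₁ v₂ t from rfl, treeSeries_ite_isLeaf,
    treeSeries_const_mul, wt_of_isLeaf _ _ _ _ _ rfl, mul_one]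

theorem treeSeries_laterChildWt :
    treeSeries (laterChildWt u₁ u₂ u₃ v₁ v₂) =
      treeSeries (wt u₁ u₂ u₃ v₁ v₂) + C (v₁ - 1) * X := by
  rw [show laterChildWt u₁ u₂ u₃ v₁ v₂ = fun t =>
      if t.isLeaf then v₁ else wt u₁ u₂ u₃ v₁ v₂ t from rfl, treeSeries_ite_isLeaf,
    wt_of_isLeaf _ _ _ _ _ rfl]

theorem treeSeries_wt_eq :
    treeSeries (wt u₁ u₂ u₃ v₁ v₂) = X + C u₁ * X ^ 2 +
      X ^ 2 * (treeSeries (secondChildWt u₁ u₂ u₃ v₁ v₂) *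
        forestSeries (laterChildWt u₁ u₂ u₃ v₁ v₂)) := by
  ext (_ | _ | _ | k)
  · simp [trees]
  · simp [trees, coeff_X, coeff_X_pow_mul', wt_of_isLeaf _ _ _ _ _ (rfl : leaf.isLeaf)]
  · simp [trees, forests, coeff_X, coeff_X_pow, coeff_X_pow_mul', coeff_zero_eq_constantCoeff,
      constantCoeff_treeSeries, wt_node_singleton]
  · rw [map_add, map_add, coeff_X, coeff_C_mul, coeff_X_pow, coeff_X_pow_mul', if_neg (by omega),
      if_neg (by omega), if_pos (by omega), show k + 1 + 1 + 1 - 2 = k + 1 by omega,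
      coeff_succ_treeSeries_mul_forestSeries _ _ k (fun l => wt u₁ u₂ u₃ v₁ v₂ (node 0 (leaf :: l)))
        (wt_node_leaf_cons_cons _ _ _ _ _ 0),
      coeff_treeSeries, trees, Finset.sum_image fun _ _ _ _ h => by simpa using h]
    ring

theorem treeSeries_wt_sub_swap :
    treeSeries (wt u₁ u₂ u₃ v₁ v₂) - treeSeries (wt u₃ u₂ u₁ v₁ v₂) = C (u₁ - u₃) * X ^ 2 := by
  have hF (w₁ w₃ : R) : forestSeries (laterChildWt w₁ u₂ w₃ v₁ v₂) *
      (1 - treeSeries (wt w₁ u₂ w₃ v₁ v₂) - C (v₁ - 1) * X) = 1 := by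
    have h := forestSeries_eq (laterChildWt w₁ u₂ w₃ v₁ v₂)
    rw [treeSeries_laterChildWt] at h
    linear_combination h
  have hS (w₁ w₃ : R) : treeSeries (wt w₁ u₂ w₃ v₁ v₂) = X + C w₁ * X ^ 2 + X ^ 2 *
      ((C w₃ * treeSeries (wt w₁ u₂ w₃ v₁ v₂) + (C (u₂ * v₂) - C w₃) * X) *
        forestSeries (laterChildWt w₁ u₂ w₃ v₁ v₂)) := by
    rw [← map_sub, ← treeSeries_secondChildWt]
    exact treeSeries_wt_eq _ _ _ _ _
  have hunit : IsUnit (1 + (1 - C (v₁ - 1)) * X - treeSeries (wt u₁ u₂ u₃ v₁ v₂) -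
      treeSeries (wt u₃ u₂ u₁ v₁ v₂)) := by
    simp [isUnit_iff_constantCoeff, constantCoeff_treeSeries]
  have key := sub_mul_eq_zero_of_motzkin_eqs (hF u₁ u₃) (hF u₃ u₁) (hS u₁ u₃) (hS u₃ u₁)
  rw [hunit.mul_left_eq_zero, ← map_sub, sub_eq_zero] at key
  exact key

end Series

end LTree

open MvPolynomial in
/-- **Theorem (symmetry of the refined Motzkin polynomial).**  For `n ≥ 2`,
`M_n(u₁,u₂,u₃;v₁,v₂) = M_n(u₃,u₂,u₁;v₁,v₂)` where
`M_n(u₁,u₂,u₃;v₁,v₂) = Σ_{T ∈ 𝒜_{n+1}} u₁^{sleaf} u₂^{etleaf} u₃^{entleaf} v₁^{yerleaf} v₂^{syleaf}`.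
Here `u₁ = X 0`, `u₂ = X 1`, `u₃ = X 2`, `v₁ = X 3`, `v₂ = X 4`. -/
theorem refined_motzkin_symmetry
    (n : ℕ) (hn : 2 ≤ n) (An : Finset LTree)
    (hAn : ∀ T, T ∈ An ↔ (LTree.IsPlane (n + 1) T ∧ LTree.yint T = 0)) :
    ∑ T ∈ An,
        (X 0 : MvPolynomial (Fin 5) ℤ) ^ LTree.sleaf T * X 1 ^ LTree.etleaf T *
          X 2 ^ LTree.entleaf T * X 3 ^ LTree.yerleaf T * X 4 ^ LTree.syleaf T
      = ∑ T ∈ An,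
          (X 2 : MvPolynomial (Fin 5) ℤ) ^ LTree.sleaf T * X 1 ^ LTree.etleaf T *
            X 0 ^ LTree.entleaf T * X 3 ^ LTree.yerleaf T * X 4 ^ LTree.syleaf T := by
  obtain rfl : An = LTree.trees (n + 2) := by
    ext T
    rw [hAn, LTree.mem_trees, LTree.IsPlane, LTree.IsTipAugmented, LTree.size]
    tauto
  have h := congrArg (PowerSeries.coeff (n + 2))
    (LTree.treeSeries_wt_sub_swap (X 0 : MvPolynomial (Fin 5) ℤ) (X 1) (X 2) (X 3) (X 4))
  rw [map_sub, PowerSeries.coeff_C_mul_X_pow, if_neg (by omega), sub_eq_zero] at h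
  simpa [LTree.wt] using h
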